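/- Define κ₀(z) = −4i·e^{−3z/2}·sin(√3z/2)·(cosh(3z/2) − cos(√3z/2)) for z ∈ ℂ. Then for every n ∈ ℕ: κ₀(2πn/√3) = 0 and κ₀'(2πn/√3) = (−1)^{n+1}·i√3·(1 − (−1)ⁿ e^{−√3πn})². -/

import Mathlib

open Complex

/-!
At `z = 2πn/√3` the factor `sin(√3z/2) = sin(πn)` vanishes, so `κ₀(z) = 0` and, by the product
rule, `κ₀'(z)` is the derivative `(√3/2)(-1)ⁿ` of that factor times the two remaining factors.
With `x = 3z/2 = √3πn` and `s = (-1)ⁿ`, the identity `2e^{-x}(cosh x - s) = (1 - s e^{-x})²`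
turns the product into the square of `ξ_n^-`.
-/

/-- `κ₀(z) = −4i e^{−3z/2} sin(√3z/2)(cosh(3z/2) − cos(√3z/2))`. -/
noncomputable def kappa0 (z : ℂ) : ℂ :=
  -4 * Complex.I * Complex.exp (-(3 * z) / 2) * Complex.sin ((Real.sqrt 3 : ℂ) * z / 2) *
    (Complex.cosh (3 * z / 2) - Complex.cos ((Real.sqrt 3 : ℂ) * z / 2))

theorem HasDerivAt.mul_mul_of_apply_eq_zero {𝕜 : Type*} [NontriviallyNormedField 𝕜]
    {f g h : 𝕜 → 𝕜} {g' x : 𝕜} (hf : DifferentiableAt 𝕜 f x) (hg : HasDerivAt g g' x)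
    (hh : DifferentiableAt 𝕜 h x) (hgx : g x = 0) :
    HasDerivAt (fun z => f z * g z * h z) (f x * g' * h x) x := by
  refine ((hf.hasDerivAt.mul hg).mul hh.hasDerivAt).congr_deriv ?_
  simp [hgx]

theorem hasDerivAt_kappa0_of_sin_eq_zero {z : ℂ} (hz : sin (Real.sqrt 3 * z / 2) = 0) :
    HasDerivAt kappa0
      (-4 * I * exp (-(3 * z) / 2) * (cos (Real.sqrt 3 * z / 2) * (Real.sqrt 3 / 2)) *
        (cosh (3 * z / 2) - cos (Real.sqrt 3 * z / 2))) z := by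
  have hlin : HasDerivAt (fun w : ℂ => Real.sqrt 3 * w / 2) (Real.sqrt 3 / 2) z := by
    simpa using ((hasDerivAt_id z).const_mul (Real.sqrt 3 : ℂ)).div_const 2
  exact HasDerivAt.mul_mul_of_apply_eq_zero (by fun_prop) hlin.csin (by fun_prop) hz

theorem two_mul_exp_neg_mul_cosh_sub {s : ℂ} (hs : s ^ 2 = 1) (x : ℂ) :
    2 * exp (-x) * (cosh x - s) = (1 - s * exp (-x)) ^ 2 := by
  have hx : exp x * exp (-x) = 1 := by rw [← exp_add, add_neg_cancel, exp_zero]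
  rw [cosh]
  linear_combination hx - exp (-x) ^ 2 * hs

/-- The paper's `z_n^o`: the cube roots of the unperturbed eigenvalues `μ_n^o`. -/
noncomputable def unperturbedCubeRoot (n : ℕ) : ℝ := 2 * Real.pi * n / Real.sqrt 3

theorem sqrt_three_mul_unperturbedCubeRoot_div_two (n : ℕ) :
    (Real.sqrt 3 : ℂ) * unperturbedCubeRoot n / 2 = (n * Real.pi : ℝ) := by
  have : (Real.sqrt 3 : ℂ) ≠ 0 := by norm_num
  rw [unperturbedCubeRoot]; push_cast; field_simp

theorem three_mul_unperturbedCubeRoot_div_two (n : ℕ) :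
    3 * (unperturbedCubeRoot n : ℂ) / 2 = (Real.sqrt 3 * Real.pi * n : ℝ) := by
  have hsq : (Real.sqrt 3 : ℂ) ^ 2 = 3 := by norm_cast; simp
  have : (Real.sqrt 3 : ℂ) ≠ 0 := by norm_num
  rw [unperturbedCubeRoot]; push_cast; field_simp; linear_combination (-(n : ℂ)) * hsq

/-- For every `n ∈ ℕ`: `κ₀(2πn/√3) = 0` and
`κ₀'(2πn/√3) = (−1)^{n+1} i√3 (1 − (−1)ⁿ e^{−√3πn})²`. -/
theorem kappa0_value_and_deriv (n : ℕ) :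
    kappa0 ((2 * Real.pi * n / Real.sqrt 3 : ℝ) : ℂ) = 0 ∧
    deriv kappa0 ((2 * Real.pi * n / Real.sqrt 3 : ℝ) : ℂ)
      = (-1) ^ (n + 1) * Complex.I * (Real.sqrt 3 : ℂ) *
        (1 - (-1) ^ n * Complex.exp (-((Real.sqrt 3 * Real.pi * n : ℝ) : ℂ))) ^ 2 := by
  change kappa0 (unperturbedCubeRoot n) = 0 ∧ deriv kappa0 (unperturbedCubeRoot n) = _
  have hsin : sin (Real.sqrt 3 * unperturbedCubeRoot n / 2) = 0 := by
    rw [sqrt_three_mul_unperturbedCubeRoot_div_two, ← ofReal_sin, Real.sin_nat_mul_pi, ofReal_zero]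
  have hcos : cos (Real.sqrt 3 * unperturbedCubeRoot n / 2) = (-1) ^ n := by
    rw [sqrt_three_mul_unperturbedCubeRoot_div_two, ← ofReal_cos, Real.cos_nat_mul_pi]
    push_cast; rfl
  refine ⟨by rw [kappa0, hsin, mul_zero, zero_mul], ?_⟩
  rw [(hasDerivAt_kappa0_of_sin_eq_zero hsin).deriv, hcos, neg_div,
    three_mul_unperturbedCubeRoot_div_two, pow_succ]
  have hsq : ((-1 : ℂ) ^ n) ^ 2 = 1 := by rw [← pow_mul, mul_comm, pow_mul]; norm_num
  linear_combination (-I * Real.sqrt 3 * (-1) ^ n) * two_mul_exp_neg_mul_cosh_sub hsq _
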